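/- arXiv:2303.12852 — 8 statements merged into one kernel-verified Lean document; each statement's English description precedes it below -/
import Mathlib

section
/- Let 1 ≤ j < k be integers, r > 0, and α ∈ [π/k, π/(k-1)). Let μ = r(cos α + i sin α). Then the polynomial Q_j(t) = t^k − (sin(kα)/sin(jα)) r^{k−j} t^j + (sin((k−j)α)/sin(jα)) r^k satisfies Q_j(μ) = 0. -/
/-! The point `μ = r e^{iα}` has powers `μ^n = r^n e^{inα}`, so after multiplying by `sin (jα)`
the value `Q_j(μ)` becomes `r^k` times
`sin (jα) e^{ikα} - sin (kα) e^{ijα} + sin ((k - j)α)`, whose real and imaginary parts vanish by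
the subtraction formula for the sine. Dividing by `sin (jα)` is legitimate because the range of
`α` forces `0 < jα < π`. -/

open Real Polynomial

theorem Complex.sin_mul_cos_add_sin_mul_I_sub_add_sin_sub (x y : ℂ) :
    Complex.sin x * (Complex.cos y + Complex.sin y * Complex.I)
      - Complex.sin y * (Complex.cos x + Complex.sin x * Complex.I) + Complex.sin (y - x) = 0 := by
  rw [Complex.sin_sub]
  ring

theorem sin_nat_mul_pos_of_mem_Ico {j k : ℕ} (hj : 1 ≤ j) (hjk : j < k) {α : ℝ}
    (hα : α ∈ Set.Ico (π / k) (π / ((k : ℝ) - 1))) : 0 < Real.sin (j * α) := by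
  obtain ⟨hα_ge, hα_lt⟩ := hα
  have hk : (1 : ℝ) < k := by exact_mod_cast hj.trans_lt hjk
  have hjk' : (j : ℝ) ≤ k - 1 := by
    have : (j : ℝ) + 1 ≤ k := by exact_mod_cast hjk
    linarith
  have hα_pos : 0 < α := (div_pos pi_pos (by linarith)).trans_le hα_ge
  apply sin_pos_of_pos_of_lt_pi (mul_pos (by exact_mod_cast hj) hα_pos)
  calc (j : ℝ) * α ≤ (k - 1) * α := by gcongr
    _ < (k - 1) * (π / (k - 1)) := by gcongr
    _ = π := mul_div_cancel₀ π (by linarith)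

theorem aeval_mul_cos_add_sin_mul_I_eq_zero {j k : ℕ} (hjk : j ≤ k) (r : ℝ) {α : ℝ}
    (hs : Real.sin (j * α) ≠ 0) :
    aeval ((r : ℂ) * (Complex.cos α + Complex.sin α * Complex.I))
      (X ^ k - C (Real.sin (k * α) / Real.sin (j * α) * r ^ (k - j)) * X ^ j
        + C (Real.sin ((k - j : ℕ) * α) / Real.sin (j * α) * r ^ k) : ℝ[X]) = 0 := by
  have hinv : Complex.sin (j * α) * (Complex.sin (j * α))⁻¹ = 1 :=
    mul_inv_cancel₀ (by exact_mod_cast hs)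
  have hpow : (r : ℂ) ^ (k - j) * (r : ℂ) ^ j = (r : ℂ) ^ k := by
    rw [← pow_add, Nat.sub_add_cancel hjk]
  simp only [map_add, map_sub, map_mul, map_pow, aeval_X, aeval_C, mul_pow,
    Complex.cos_add_sin_mul_I_pow, Complex.coe_algebraMap]
  push_cast [Nat.cast_sub hjk]
  rw [sub_mul]
  linear_combination (r : ℂ) ^ k * (Complex.sin (j * α))⁻¹ *
      Complex.sin_mul_cos_add_sin_mul_I_sub_add_sin_sub (j * α) (k * α)
    - (r : ℂ) ^ k * (Complex.cos (k * α) + Complex.sin (k * α) * Complex.I) * hinv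
    - Complex.sin (k * α) / Complex.sin (j * α) *
      (Complex.cos (j * α) + Complex.sin (j * α) * Complex.I) * hpow

theorem stmt_2_general (j k : ℕ) (hj : 1 ≤ j) (hjk : j < k) (r : ℝ) (α : ℝ)
    (hα : α ∈ Set.Ico (π / k) (π / ((k : ℝ) - 1)))
    (μ : ℂ) (hμ : μ = (r : ℂ) * (Complex.cos α + Complex.sin α * Complex.I))
    (Q : Polynomial ℝ)
    (hQ : Q = X ^ k - C (Real.sin (k * α) / Real.sin (j * α) * r ^ (k - j)) * X ^ j
        + C (Real.sin ((k - j : ℕ) * α) / Real.sin (j * α) * r ^ k)) :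
    Polynomial.aeval μ Q = 0 := by
  subst hμ hQ
  exact aeval_mul_cos_add_sin_mul_I_eq_zero hjk.le r (sin_nat_mul_pos_of_mem_Ico hj hjk hα).ne'

theorem stmt_2 (j k : ℕ) (hj : 1 ≤ j) (hjk : j < k) (r : ℝ) (hr : 0 < r) (α : ℝ)
    (hα : α ∈ Set.Ico (π / k) (π / ((k : ℝ) - 1)))
    (μ : ℂ) (hμ : μ = (r : ℂ) * (Complex.cos α + Complex.sin α * Complex.I))
    (Q : Polynomial ℝ)
    (hQ : Q = X ^ k - C (Real.sin (k * α) / Real.sin (j * α) * r ^ (k - j)) * X ^ j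
        + C (Real.sin ((k - j : ℕ) * α) / Real.sin (j * α) * r ^ k)) :
    Polynomial.aeval μ Q = 0 :=
  stmt_2_general j k hj hjk r α hα μ hμ Q hQ
end

section
/- Let 1 ≤ j < k be integers, r > 0, and α ∈ [π/k, π/(k-1)). Then the polynomial Q_j(t) = t^k − (sin(kα)/sin(jα)) r^{k−j} t^j + (sin((k−j)α)/sin(jα)) r^k has nonnegative real coefficients and nonzero constant term (i.e., Q_j(0) ≠ 0). -/
/-!
For `α ∈ [π/k, π/(k-1))` every angle `m α` with `0 < m < k` lies in `(0, π)`, so `sin (j α)` and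
`sin ((k - j) α)` are positive, while `k α ∈ [π, 2π)` makes `sin (k α) ≤ 0`. Hence the middle
coefficient `-(sin (k α) / sin (j α)) r^(k-j)` is nonnegative and the constant term is positive.
-/

open Real Polynomial

lemma sin_natCast_mul_pos_of_lt {m k : ℕ} {α : ℝ} (hm : 0 < m) (hmk : m < k) (hα₀ : 0 < α)
    (hα : α < π / ((k : ℝ) - 1)) : 0 < sin (m * α) := by
  have hmk' : (m : ℝ) ≤ (k : ℝ) - 1 := by
    have : (m : ℝ) + 1 ≤ k := by exact_mod_cast hmk
    linarith
  have hm' : (0 : ℝ) < m := by exact_mod_cast hm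
  have hk₁ : (0 : ℝ) < (k : ℝ) - 1 := hm'.trans_le hmk'
  refine sin_pos_of_pos_of_lt_pi (by positivity) ?_
  calc (m : ℝ) * α ≤ ((k : ℝ) - 1) * α := by gcongr
    _ < ((k : ℝ) - 1) * (π / ((k : ℝ) - 1)) := by gcongr
    _ = π := by field_simp

lemma sin_natCast_mul_nonpos {k : ℕ} {α : ℝ} (hk : 2 ≤ k)
    (hα : α ∈ Set.Ico (π / k) (π / ((k : ℝ) - 1))) : sin (k * α) ≤ 0 := by
  obtain ⟨hα₁, hα₂⟩ := hα
  have hk' : (2 : ℝ) ≤ k := by exact_mod_cast hk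
  have hπ_le : π ≤ k * α := by
    calc π = (k : ℝ) * (π / k) := by field_simp
      _ ≤ k * α := by gcongr
  have hlt_two_pi : (k : ℝ) * α < 2 * π := by
    calc (k : ℝ) * α < k * (π / ((k : ℝ) - 1)) := by gcongr
      _ ≤ 2 * ((k : ℝ) - 1) * (π / ((k : ℝ) - 1)) := by
          gcongr
          · have : (0 : ℝ) < (k : ℝ) - 1 := by linarith
            positivity
          · linarith
      _ = 2 * π := by field_simp [show (k : ℝ) - 1 ≠ 0 by linarith]
  rw [← sin_sub_two_pi]
  exact sin_nonpos_of_nonpos_of_neg_pi_le (by linarith) (by linarith)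

lemma Polynomial.coeff_X_pow_sub_C_mul_X_pow_add_C_nonneg {R : Type*} [Ring R] [PartialOrder R]
    [IsOrderedRing R] {a b : R} (ha : a ≤ 0) (hb : 0 ≤ b) (j k i : ℕ) :
    0 ≤ (X ^ k - C a * X ^ j + C b).coeff i := by
  simp only [coeff_add, coeff_sub, coeff_C_mul, coeff_X_pow, coeff_C]
  have h₁ : (0 : R) ≤ if i = k then 1 else 0 := by split_ifs <;> simp
  have h₂ : (a * if i = j then 1 else 0) ≤ 0 := by split_ifs <;> simp [ha]
  have h₃ : (0 : R) ≤ if i = 0 then b else 0 := by split_ifs <;> simp [hb]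
  exact add_nonneg (sub_nonneg.2 (h₂.trans h₁)) h₃

lemma Polynomial.eval_zero_X_pow_sub_C_mul_X_pow_add_C {R : Type*} [CommRing R] {j k : ℕ}
    (hj : j ≠ 0) (hk : k ≠ 0) (a b : R) : (X ^ k - C a * X ^ j + C b).eval 0 = b := by
  simp [zero_pow hj, zero_pow hk]

theorem stmt_3 (j k : ℕ) (hj : 1 ≤ j) (hjk : j < k) (r : ℝ) (hr : 0 < r) (α : ℝ)
    (hα : α ∈ Set.Ico (π / k) (π / ((k : ℝ) - 1)))
    (Q : Polynomial ℝ)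
    (hQ : Q = X ^ k - C (Real.sin (k * α) / Real.sin (j * α) * r ^ (k - j)) * X ^ j
        + C (Real.sin ((k - j : ℕ) * α) / Real.sin (j * α) * r ^ k)) :
    (∀ i, 0 ≤ Q.coeff i) ∧ Q.eval 0 ≠ 0 := by
  have hα₀ : 0 < α := (div_pos pi_pos (Nat.cast_pos.2 (by omega))).trans_le hα.1
  have hsin_j : 0 < sin (j * α) := sin_natCast_mul_pos_of_lt hj hjk hα₀ hα.2
  have hsin_kj : 0 < sin ((k - j : ℕ) * α) :=
    sin_natCast_mul_pos_of_lt (by omega) (by omega) hα₀ hα.2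
  have hsin_k : sin (k * α) ≤ 0 := sin_natCast_mul_nonpos (by omega) hα
  have hmiddle : sin (k * α) / sin (j * α) * r ^ (k - j) ≤ 0 :=
    mul_nonpos_of_nonpos_of_nonneg (div_nonpos_of_nonpos_of_nonneg hsin_k hsin_j.le) (by positivity)
  have hconst : 0 < sin ((k - j : ℕ) * α) / sin (j * α) * r ^ k :=
    mul_pos (div_pos hsin_kj hsin_j) (pow_pos hr k)
  subst hQ
  refine ⟨coeff_X_pow_sub_C_mul_X_pow_add_C_nonneg hmiddle hconst.le j k, ?_⟩
  rw [eval_zero_X_pow_sub_C_mul_X_pow_add_C (by omega) (by omega)]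
  exact hconst.ne'
end

section
/- Let k ≥ 2, r > 0, and α ∈ (π/k, π/(k-1)), and let μ = r(cos α + i sin α). Define Q(t) = (1/(k−1)) Σ_{j=1}^{k−1} Q_j(t), where Q_j(t) = t^k − (sin(kα)/sin(jα)) r^{k−j} t^j + (sin((k−j)α)/sin(jα)) r^k. Then Q is a monic polynomial of degree k with all coefficients (in degrees 0 through k) strictly positive, and Q(μ) = 0. -/
open Real Polynomial

/-!
With `μ = r e^{iα}`, multiplying `Q_j(μ)` by `sin jα / r^k` gives
`sin jα · e^{ikα} - sin kα · e^{ijα} + sin (k-j)α`, whose imaginary part cancels and whose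
real part vanishes by the subtraction formula for `sin ((k-j)α)`; so every `Q_j`, hence `Q`,
vanishes at `μ`. For `1 ≤ j < k` the angle bounds give `0 < jα < π < kα < 2π`, so
`sin jα > 0 > sin kα`, which makes the coefficients `-sin kα / sin jα · r^(k-j)` and the
constant terms of the `Q_j` positive.
-/

section TrinomialSum

open Finset

variable {R : Type*} [CommRing R] (k : ℕ) (a b : ℕ → R)

theorem coeff_X_pow_sub_C_mul_X_pow_add_C (j i : ℕ) :
    (X ^ k - C (a j) * X ^ j + C (b j) : R[X]).coeff i =
      (if i = k then 1 else 0) - (if i = j then a j else 0) + (if i = 0 then b j else 0) := by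
  simp only [coeff_add, coeff_sub, coeff_C_mul, coeff_X_pow, coeff_C, mul_ite, mul_one, mul_zero]

theorem natDegree_sum_X_pow_sub_C_mul_X_pow_add_C_le :
    (∑ j ∈ Ico 1 k, (X ^ k - C (a j) * X ^ j + C (b j))).natDegree ≤ k := by
  refine natDegree_sum_le_of_forall_le _ _ fun j hj => ?_
  have hjk : j ≤ k := (mem_Ico.1 hj).2.le
  compute_degree
  exact max_le le_rfl hjk

theorem coeff_sum_X_pow_sub_C_mul_X_pow_add_C_self :
    (∑ j ∈ Ico 1 k, (X ^ k - C (a j) * X ^ j + C (b j))).coeff k = ((k - 1 : ℕ) : R) := by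
  rw [finsetSum_coeff, sum_congr rfl (g := fun _ => 1), sum_const, Nat.card_Ico, nsmul_one]
  intro j hj
  rw [mem_Ico] at hj
  rw [coeff_X_pow_sub_C_mul_X_pow_add_C, if_pos rfl, if_neg (by omega), if_neg (by omega)]
  ring

theorem coeff_sum_X_pow_sub_C_mul_X_pow_add_C_of_mem {i : ℕ} (hi : i ∈ Ico 1 k) :
    (∑ j ∈ Ico 1 k, (X ^ k - C (a j) * X ^ j + C (b j))).coeff i = -a i := by
  rw [mem_Ico] at hi
  rw [finsetSum_coeff, sum_eq_single_of_mem i (mem_Ico.2 hi)]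
  · rw [coeff_X_pow_sub_C_mul_X_pow_add_C, if_neg (by omega), if_pos rfl, if_neg (by omega)]
    ring
  · intro j hj hji
    rw [mem_Ico] at hj
    rw [coeff_X_pow_sub_C_mul_X_pow_add_C, if_neg (by omega), if_neg (Ne.symm hji),
      if_neg (by omega)]
    ring

theorem coeff_sum_X_pow_sub_C_mul_X_pow_add_C_zero :
    (∑ j ∈ Ico 1 k, (X ^ k - C (a j) * X ^ j + C (b j))).coeff 0 = ∑ j ∈ Ico 1 k, b j := by
  rw [finsetSum_coeff]
  refine sum_congr rfl fun j hj => ?_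
  rw [mem_Ico] at hj
  rw [coeff_X_pow_sub_C_mul_X_pow_add_C, if_neg (by omega), if_neg (by omega), if_pos rfl]
  ring

theorem coeff_sum_X_pow_sub_C_mul_X_pow_add_C_pos [PartialOrder R] [IsStrictOrderedRing R]
    (hk : 2 ≤ k) (ha : ∀ j ∈ Ico 1 k, a j < 0) (hb : ∀ j ∈ Ico 1 k, 0 < b j) {i : ℕ}
    (hi : i ≤ k) : 0 < (∑ j ∈ Ico 1 k, (X ^ k - C (a j) * X ^ j + C (b j))).coeff i := by
  rcases hi.eq_or_lt with rfl | hik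
  · rw [coeff_sum_X_pow_sub_C_mul_X_pow_add_C_self, Nat.cast_pos]
    omega
  rcases Nat.eq_zero_or_pos i with rfl | hi0
  · rw [coeff_sum_X_pow_sub_C_mul_X_pow_add_C_zero]
    exact sum_pos hb ⟨1, mem_Ico.2 ⟨le_rfl, hk⟩⟩
  · have hi : i ∈ Ico 1 k := mem_Ico.2 ⟨hi0, hik⟩
    rw [coeff_sum_X_pow_sub_C_mul_X_pow_add_C_of_mem k a b hi, neg_pos]
    exact ha i hi

end TrinomialSum

theorem aeval_polar_X_pow_sub_C_mul_X_pow_add_C_eq_zero (r α : ℝ) {j k : ℕ} (hjk : j ≤ k)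
    (hj : sin (j * α) ≠ 0) :
    aeval ((r : ℂ) * (Complex.cos α + Complex.sin α * Complex.I))
      (X ^ k - C (sin (k * α) / sin (j * α) * r ^ (k - j)) * X ^ j
        + C (sin ((k - j : ℕ) * α) / sin (j * α) * r ^ k)) = 0 := by
  have hjC : Complex.sin (j * α) ≠ 0 := by exact_mod_cast hj
  have hr : (r : ℂ) ^ k = r ^ (k - j) * r ^ j := by rw [← pow_add, Nat.sub_add_cancel hjk]
  simp only [map_add, map_sub, map_mul, map_pow, aeval_X, aeval_C, Complex.coe_algebraMap,
    mul_pow, Complex.cos_add_sin_mul_I_pow]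
  push_cast [hjk]
  rw [hr, sub_mul, Complex.sin_sub]
  linear_combination
    (-(r : ℂ) ^ (k - j) * r ^ j * (Complex.cos (k * α) + Complex.sin (k * α) * Complex.I)) *
      mul_inv_cancel₀ hjC

theorem pi_lt_mul_and_mul_lt_pi_of_mem_Ioo {k : ℕ} {α : ℝ} (hk : 2 ≤ k)
    (hα : α ∈ Set.Ioo (π / k) (π / ((k : ℝ) - 1))) :
    π < k * α ∧ ((k : ℝ) - 1) * α < π := by
  have hk2 : (2 : ℝ) ≤ k := by exact_mod_cast hk
  obtain ⟨h₁, h₂⟩ := hα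
  constructor
  · rwa [div_lt_iff₀' (by linarith)] at h₁
  · rwa [lt_div_iff₀' (by linarith)] at h₂

theorem sin_neg_of_pi_lt_of_lt_two_pi {x : ℝ} (h₁ : π < x) (h₂ : x < 2 * π) : sin x < 0 := by
  rw [← sin_sub_two_pi]
  exact sin_neg_of_neg_of_neg_pi_lt (by linarith) (by linarith)

theorem sin_nat_mul_pos_of_mem_Ioo {k j : ℕ} {α : ℝ} (hk : 2 ≤ k)
    (hα : α ∈ Set.Ioo (π / k) (π / ((k : ℝ) - 1))) (hj : j ∈ Finset.Ico 1 k) :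
    0 < sin (j * α) := by
  obtain ⟨-, hlt_π⟩ := pi_lt_mul_and_mul_lt_pi_of_mem_Ioo hk hα
  have hα0 : 0 < α := lt_trans (by positivity) hα.1
  obtain ⟨hj1, hjk⟩ := Finset.mem_Ico.1 hj
  have hj1 : (1 : ℝ) ≤ j := by exact_mod_cast hj1
  have hjk : (j : ℝ) + 1 ≤ k := by exact_mod_cast hjk
  exact sin_pos_of_pos_of_lt_pi (by positivity) (by nlinarith)

theorem sin_mul_neg_of_mem_Ioo {k : ℕ} {α : ℝ} (hk : 2 ≤ k)
    (hα : α ∈ Set.Ioo (π / k) (π / ((k : ℝ) - 1))) : sin (k * α) < 0 := by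
  obtain ⟨hπ_lt, hlt_π⟩ := pi_lt_mul_and_mul_lt_pi_of_mem_Ioo hk hα
  have hk2 : (2 : ℝ) ≤ k := by exact_mod_cast hk
  have hα0 : 0 < α := lt_trans (by positivity) hα.1
  exact sin_neg_of_pi_lt_of_lt_two_pi hπ_lt (by nlinarith)

theorem stmt_4 (k : ℕ) (hk : 2 ≤ k) (r : ℝ) (hr : 0 < r) (α : ℝ)
    (hα : α ∈ Set.Ioo (π / k) (π / ((k : ℝ) - 1)))
    (μ : ℂ) (hμ : μ = (r : ℂ) * (Complex.cos α + Complex.sin α * Complex.I))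
    (Qj : ℕ → Polynomial ℝ)
    (hQj : ∀ j, Qj j = X ^ k - C (Real.sin (k * α) / Real.sin (j * α) * r ^ (k - j)) * X ^ j
        + C (Real.sin ((k - j : ℕ) * α) / Real.sin (j * α) * r ^ k))
    (Q : Polynomial ℝ)
    (hQ : Q = C (1 / ((k : ℝ) - 1)) * ∑ j ∈ Finset.Ico 1 k, Qj j) :
    Q.Monic ∧ Q.natDegree = k ∧ (∀ i ≤ k, 0 < Q.coeff i) ∧ Polynomial.aeval μ Q = 0 := by
  have hk2 : (2 : ℝ) ≤ k := by exact_mod_cast hk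
  have hsin_pos : ∀ j ∈ Finset.Ico 1 k, 0 < sin (j * α) :=
    fun j hj => sin_nat_mul_pos_of_mem_Ioo hk hα hj
  have hsin_k : sin (k * α) < 0 := sin_mul_neg_of_mem_Ioo hk hα
  simp only [hQj] at hQ
  have hQ_coeff_k : Q.coeff k = 1 := by
    rw [hQ, coeff_C_mul, coeff_sum_X_pow_sub_C_mul_X_pow_add_C_self, Nat.cast_pred (by omega)]
    exact one_div_mul_cancel (by linarith)
  have hQ_deg : Q.natDegree ≤ k := by
    rw [hQ]
    exact (natDegree_C_mul_le _ _).trans (natDegree_sum_X_pow_sub_C_mul_X_pow_add_C_le k _ _)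
  refine ⟨monic_of_natDegree_le_of_coeff_eq_one k hQ_deg hQ_coeff_k,
    hQ_deg.antisymm (le_natDegree_of_ne_zero (by simp [hQ_coeff_k])), fun i hi => ?_, ?_⟩
  · have ha : ∀ j ∈ Finset.Ico 1 k, sin (k * α) / sin (j * α) * r ^ (k - j) < 0 :=
      fun j hj => mul_neg_of_neg_of_pos (div_neg_of_neg_of_pos hsin_k (hsin_pos j hj))
        (by positivity)
    have hb : ∀ j ∈ Finset.Ico 1 k, 0 < sin ((k - j : ℕ) * α) / sin (j * α) * r ^ k := by
      intro j hj
      have hkj : k - j ∈ Finset.Ico 1 k := by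
        rw [Finset.mem_Ico] at hj ⊢
        omega
      have := hsin_pos j hj
      have := hsin_pos (k - j) hkj
      positivity
    rw [hQ, coeff_C_mul]
    exact mul_pos (one_div_pos.2 (by linarith))
      (coeff_sum_X_pow_sub_C_mul_X_pow_add_C_pos k _ _ hk ha hb hi)
  · rw [hQ, hμ, map_mul, map_sum, Finset.sum_eq_zero fun j hj =>
      aeval_polar_X_pow_sub_C_mul_X_pow_add_C_eq_zero r α (Finset.mem_Ico.1 hj).2.le
        (hsin_pos j hj).ne', mul_zero]
end

section
/- Let n ≥ 1 and let μ = r(cos α + i sin α) be a complex number with r > 0 and α ∈ (−π, π]. If |α| ≥ π/n, then there exists a polynomial q of degree n with nonnegative real coefficients such that q(0) ≠ 0 and q(μ) = 0. -/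
/-!
By conjugation and by rescaling roots (`Polynomial.scaleRoots`) it suffices to treat
`μ = exp (α i)` with `π / n ≤ α ≤ π`. Multiplying by `X + 1` raises the degree, so by induction on
`n` only the range `π / (n + 1) ≤ α < π / n` needs a new polynomial of degree `n + 1`, namely the
trinomial `sin (n α) X ^ (n + 1) - sin ((n + 1) α) X ^ n + sin α`: it vanishes at `exp (α i)`, and
its coefficients are nonnegative because `n α < π ≤ (n + 1) α < 2 π`.
-/

open Real Polynomial

namespace Polynomial

variable (R : Type*) [Semiring R] [PartialOrder R]

def nonnegCoeffs [IsOrderedRing R] : Subsemiring R[X] where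
  carrier := {p | ∀ i, 0 ≤ p.coeff i}
  mul_mem' {p q} hp hq i := by
    rw [coeff_mul]
    exact Finset.sum_nonneg fun x _ => mul_nonneg (hp _) (hq _)
  one_mem' i := by
    rw [coeff_one]
    split_ifs <;> simp
  add_mem' hp hq i := by
    rw [coeff_add]
    exact add_nonneg (hp i) (hq i)
  zero_mem' i := by simp

variable {R} [IsOrderedRing R]

theorem C_mem_nonnegCoeffs {a : R} (ha : 0 ≤ a) : C a ∈ nonnegCoeffs R := by
  intro i
  rw [coeff_C]
  split_ifs <;> simp [ha]

theorem X_mem_nonnegCoeffs : (X : R[X]) ∈ nonnegCoeffs R := by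
  intro i
  rw [coeff_X]
  split_ifs <;> simp

theorem scaleRoots_mem_nonnegCoeffs {p : R[X]} (hp : p ∈ nonnegCoeffs R) {s : R} (hs : 0 ≤ s) :
    p.scaleRoots s ∈ nonnegCoeffs R := fun i => by
  rw [coeff_scaleRoots]
  exact mul_nonneg (hp i) (pow_nonneg hs _)

end Polynomial

def IsRootOfNonnegPoly (n : ℕ) (z : ℂ) : Prop :=
  ∃ q : ℝ[X], q.natDegree = n ∧ q ∈ nonnegCoeffs ℝ ∧ q.coeff 0 ≠ 0 ∧ aeval z q = 0

namespace IsRootOfNonnegPoly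

variable {n : ℕ} {z : ℂ}

theorem conj (h : IsRootOfNonnegPoly n z) : IsRootOfNonnegPoly n (starRingEnd ℂ z) := by
  obtain ⟨q, hdeg, hnonneg, hcoeff, hroot⟩ := h
  exact ⟨q, hdeg, hnonneg, hcoeff, by rw [aeval_conj, hroot, map_zero]⟩

theorem ofReal_mul (h : IsRootOfNonnegPoly n z) {r : ℝ} (hr : 0 < r) :
    IsRootOfNonnegPoly n (r * z) := by
  obtain ⟨q, hdeg, hnonneg, hcoeff, hroot⟩ := h
  refine ⟨q.scaleRoots r, by rw [natDegree_scaleRoots, hdeg],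
    scaleRoots_mem_nonnegCoeffs hnonneg hr.le, ?_, scaleRoots_aeval_eq_zero hroot⟩
  rw [coeff_scaleRoots]
  exact mul_ne_zero hcoeff (pow_ne_zero _ hr.ne')

theorem succ (h : IsRootOfNonnegPoly n z) : IsRootOfNonnegPoly (n + 1) z := by
  obtain ⟨q, hdeg, hnonneg, hcoeff, hroot⟩ := h
  have hq : q ≠ 0 := fun h => hcoeff (by simp [h])
  refine ⟨q * (X + C 1), ?_, ?_, ?_, by rw [map_mul, hroot, zero_mul]⟩
  · rw [natDegree_mul hq (X_add_C_ne_zero 1), natDegree_X_add_C, hdeg]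
  · exact mul_mem hnonneg (add_mem X_mem_nonnegCoeffs (C_mem_nonnegCoeffs zero_le_one))
  · simpa [mul_coeff_zero] using hcoeff

end IsRootOfNonnegPoly

theorem ofReal_sin_nat_mul (α : ℝ) (k : ℕ) :
    (Real.sin (k * α) : ℂ) =
      ((Complex.exp (α * Complex.I))⁻¹ ^ k - Complex.exp (α * Complex.I) ^ k) * Complex.I / 2 := by
  rw [Complex.ofReal_sin, Complex.sin, ← Complex.exp_neg, ← Complex.exp_nat_mul,
    ← Complex.exp_nat_mul]
  push_cast
  ring_nf

theorem aeval_exp_trinomial_eq_zero (α : ℝ) (n : ℕ) :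
    aeval (Complex.exp (α * Complex.I))
      (trinomial 0 n (n + 1) (Real.sin α) (-Real.sin ((n + 1) * α)) (Real.sin (n * α))) = 0 := by
  set w := Complex.exp (α * Complex.I)
  have hw : w⁻¹ ^ n * w ^ n = 1 := by
    rw [← mul_pow, inv_mul_cancel₀ (Complex.exp_ne_zero _), one_pow]
  have hsin1 := ofReal_sin_nat_mul α 1
  have hsinn1 := ofReal_sin_nat_mul α (n + 1)
  rw [Nat.cast_one, one_mul] at hsin1
  rw [Nat.cast_succ] at hsinn1
  simp only [trinomial_def, map_add, map_mul, map_pow, aeval_X, aeval_C, Complex.coe_algebraMap,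
    Complex.ofReal_neg, hsin1, ofReal_sin_nat_mul α n, hsinn1]
  linear_combination (Complex.I / 2 * (w - w⁻¹)) * hw

theorem isRootOfNonnegPoly_exp_of_mem_Ico {n : ℕ} (hn : 1 ≤ n) {α : ℝ}
    (hα : α ∈ Set.Ico (π / (n + 1)) (π / n)) :
    IsRootOfNonnegPoly (n + 1) (Complex.exp (α * Complex.I)) := by
  have hn' : (0 : ℝ) < n := by exact_mod_cast hn
  have hα0 : 0 < α := lt_of_lt_of_le (by positivity) hα.1
  have hnα : n * α < π := (lt_div_iff₀' hn').mp hα.2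
  have hn1α : π ≤ (n + 1) * α := (div_le_iff₀' (by positivity)).mp hα.1
  have hαπ : α < π := hα.2.trans_le (div_le_self pi_pos.le (by exact_mod_cast hn))
  have hsin_n : 0 < Real.sin (n * α) := sin_pos_of_pos_of_lt_pi (by positivity) hnα
  have hsin_n1 : Real.sin ((n + 1) * α) ≤ 0 := by
    rw [← sin_sub_two_pi]
    exact sin_nonpos_of_nonpos_of_neg_pi_le (by linarith) (by linarith)
  have hsin : 0 < Real.sin α := sin_pos_of_pos_of_lt_pi hα0 hαπ
  refine ⟨_, trinomial_natDegree hn n.lt_succ_self hsin_n.ne', ?_,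
    by rw [trinomial_trailing_coeff' hn n.lt_succ_self]; exact hsin.ne',
    aeval_exp_trinomial_eq_zero α n⟩
  rw [trinomial_def]
  refine add_mem (add_mem ?_ ?_) ?_ <;>
    exact mul_mem (C_mem_nonnegCoeffs (by linarith)) (pow_mem X_mem_nonnegCoeffs _)

theorem isRootOfNonnegPoly_exp {n : ℕ} (hn : 1 ≤ n) {α : ℝ} (hαn : π / n ≤ α) (hαπ : α ≤ π) :
    IsRootOfNonnegPoly n (Complex.exp (α * Complex.I)) := by
  induction n, hn using Nat.le_induction generalizing α with
  | base =>
    have hα : α = π := le_antisymm hαπ (by simpa using hαn)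
    refine ⟨X + C 1, natDegree_X_add_C 1,
      add_mem X_mem_nonnegCoeffs (C_mem_nonnegCoeffs zero_le_one), by simp, ?_⟩
    simp [hα, Complex.exp_pi_mul_I]
  | succ n hn ih =>
    by_cases hα : π / n ≤ α
    · exact (ih hα hαπ).succ
    · exact isRootOfNonnegPoly_exp_of_mem_Ico hn ⟨by exact_mod_cast hαn, not_le.mp hα⟩

theorem stmt_5 (n : ℕ) (hn : 1 ≤ n) (r : ℝ) (hr : 0 < r) (α : ℝ)
    (hα : α ∈ Set.Ioc (-π) π) (hαn : π / n ≤ |α|)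
    (μ : ℂ) (hμ : μ = (r : ℂ) * (Complex.cos α + Complex.sin α * Complex.I)) :
    ∃ q : Polynomial ℝ, q.natDegree = n ∧ (∀ i, 0 ≤ q.coeff i) ∧
      q.eval 0 ≠ 0 ∧ Polynomial.aeval μ q = 0 := by
  have habs : |α| ≤ π := abs_le.mpr ⟨hα.1.le, hα.2⟩
  have hroot := (isRootOfNonnegPoly_exp hn hαn habs).ofReal_mul hr
  have hμ' : μ = r * Complex.exp (α * Complex.I) := by rw [hμ, Complex.exp_mul_I]
  obtain ⟨q, hdeg, hnonneg, hcoeff, hq⟩ : IsRootOfNonnegPoly n μ := by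
    rcases abs_cases α with ⟨hα_eq, -⟩ | ⟨hα_eq, -⟩
    · rwa [hμ', ← hα_eq]
    · convert hroot.conj using 1
      rw [hμ', hα_eq, map_mul, Complex.conj_ofReal, ← Complex.exp_conj]
      simp
  exact ⟨q, hdeg, hnonneg, by rwa [← coeff_zero_eq_eval_zero], hq⟩
end

section
/- Let n ≥ 2 and let μ = r(cos α + i sin α) be a complex number with r > 0 and α ∈ (−π, π]. If |α| ≥ π/n and π/α is not an integer, then there exists a polynomial q of degree n with strictly positive real coefficients such that q(μ) = 0. -/
/-!
Put β = |α| and m = ⌊π/β⌋, so that mβ < π < (m+1)β and 1 ≤ m < n. Then sin(mβ), -sin((m+1)β)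
and sin β are positive, and the identity sin(θ - β) - sin θ · e^{iβ} + sin β · e^{iθ} = 0 at
θ = (m+1)β gives a trinomial with positive coefficients in degrees 0, 1 and m+1 vanishing at
r e^{iβ}. As 1 and a non-real μ span ℂ over ℝ, the value of 1 + X + ⋯ + X^n at μ is that of some
real a + bX; subtracting a + bX and adding a large multiple of the trinomial gives a polynomial of
degree n with positive coefficients vanishing at μ. Conjugation handles α < 0.
-/

open Real Polynomial

theorem Complex.exists_ofReal_add_ofReal_mul_eq {μ : ℂ} (hμ : μ.im ≠ 0) (z : ℂ) :
    ∃ a b : ℝ, (a : ℂ) + b * μ = z :=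
  ⟨z.re - z.im / μ.im * μ.re, z.im / μ.im, by apply Complex.ext <;> simp; field_simp⟩

theorem coeff_sum_range_X_pow (n i : ℕ) :
    (∑ k ∈ Finset.range (n + 1), (X ^ k : ℝ[X])).coeff i = if i ≤ n then 1 else 0 := by
  simp [coeff_X_pow]

theorem exists_natDegree_eq_coeff_pos_aeval_eq_zero {μ : ℂ} (hμ : μ.im ≠ 0) {P : ℝ[X]}
    (hP : aeval μ P = 0) (h0 : 0 < P.coeff 0) (h1 : 0 < P.coeff 1) (hP_nonneg : ∀ i, 0 ≤ P.coeff i)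
    {n : ℕ} (hn : P.natDegree ≤ n) :
    ∃ q : ℝ[X], q.natDegree = n ∧ (∀ i ≤ n, 0 < q.coeff i) ∧ aeval μ q = 0 := by
  set G : ℝ[X] := ∑ k ∈ Finset.range (n + 1), X ^ k
  obtain ⟨a, b, hab⟩ := Complex.exists_ofReal_add_ofReal_mul_eq hμ (aeval μ G)
  set t := |a| / P.coeff 0 + |b| / P.coeff 1
  have hcoeff : ∀ i, (G - C a - C b * X + C t * P).coeff i =
      (if i ≤ n then 1 else 0) - (if i = 0 then a else 0) - (if i = 1 then b else 0)
        + t * P.coeff i := by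
    intro i
    rw [coeff_add, coeff_sub, coeff_sub, coeff_C_mul_X, coeff_C, coeff_C_mul, coeff_sum_range_X_pow]
  have hn1 : 1 ≤ n := (le_natDegree_of_ne_zero h1.ne').trans hn
  have ht0 : |a| ≤ t * P.coeff 0 := by
    have : 0 ≤ |b| / P.coeff 1 * P.coeff 0 := by positivity
    simp only [t, add_mul, div_mul_cancel₀ _ h0.ne']
    linarith
  have ht1 : |b| ≤ t * P.coeff 1 := by
    have : 0 ≤ |a| / P.coeff 0 * P.coeff 1 := by positivity
    simp only [t, add_mul, div_mul_cancel₀ _ h1.ne']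
    linarith
  have hpos : ∀ i ≤ n, 0 < (G - C a - C b * X + C t * P).coeff i := by
    intro i hi
    rw [hcoeff]
    rcases Nat.lt_trichotomy i 1 with hi0 | rfl | hi2
    · obtain rfl : i = 0 := by omega
      simp only [hi, ↓reduceIte, zero_ne_one, sub_zero]
      linarith [le_abs_self a]
    · simp only [hi, ↓reduceIte, one_ne_zero, sub_zero]
      linarith [le_abs_self b]
    · simp only [hi, ↓reduceIte, show i ≠ 0 by omega, show i ≠ 1 by omega, sub_zero]
      have := hP_nonneg i
      have : 0 ≤ t := by positivity
      positivity
  refine ⟨G - C a - C b * X + C t * P, ?_, hpos, ?_⟩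
  · refine natDegree_eq_of_le_of_coeff_ne_zero ?_ (hpos n le_rfl).ne'
    rw [natDegree_le_iff_coeff_eq_zero]
    intro i hi
    rw [hcoeff, coeff_eq_zero_of_natDegree_lt (hn.trans_lt hi)]
    simp [show ¬ i ≤ n by omega, show i ≠ 0 by omega, show i ≠ 1 by omega]
  · simp only [map_add, map_sub, map_mul, aeval_C, aeval_X, hP, ← hab]
    simp

theorem sin_sub_sub_sin_mul_exp_add_sin_mul_exp (θ β : ℝ) :
    (sin (θ - β) : ℂ) - sin θ * Complex.exp (β * Complex.I)
      + sin β * Complex.exp (θ * Complex.I) = 0 := by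
  simp only [Complex.ofReal_sin, Complex.ofReal_sub, Complex.sin_sub, Complex.exp_mul_I]
  ring

theorem exists_nat_mul_lt_pi_lt_succ_mul {n : ℕ} {β : ℝ} (hβ : 0 < β) (hβπ : β ≤ π)
    (hβn : π ≤ n * β) (hβ_int : ∀ k : ℕ, π / β ≠ k) :
    ∃ m : ℕ, 1 ≤ m ∧ m + 1 ≤ n ∧ m * β < π ∧ π < (m + 1) * β := by
  have hfloor_lt : (⌊π / β⌋₊ : ℝ) < π / β :=
    (Nat.floor_le (by positivity)).lt_of_ne (hβ_int _).symm
  have hn : π / β < n := ((div_le_iff₀ hβ).2 (by linarith)).lt_of_ne (hβ_int n)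
  refine ⟨⌊π / β⌋₊, Nat.le_floor (by simpa using (one_le_div hβ).2 hβπ), ?_, ?_, ?_⟩
  · exact_mod_cast (Nat.floor_lt (by positivity)).2 hn
  · exact (lt_div_iff₀ hβ).1 hfloor_lt
  · exact (div_lt_iff₀ hβ).1 (Nat.lt_floor_add_one _)

theorem exists_coeff_nonneg_aeval_ofReal_mul_exp_eq_zero {r β : ℝ} (hr : 0 < r) (hβ : 0 < β)
    {m : ℕ} (hm : 1 ≤ m) (hmβ : m * β < π) (hπ : π < (m + 1) * β) :
    ∃ P : ℝ[X], P.natDegree ≤ m + 1 ∧ 0 < P.coeff 0 ∧ 0 < P.coeff 1 ∧ (∀ i, 0 ≤ P.coeff i) ∧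
      aeval (r * Complex.exp (β * Complex.I)) P = 0 := by
  have hβπ : β < π := by nlinarith [(Nat.one_le_cast (α := ℝ)).2 hm]
  have h_sin_β : 0 < sin β := sin_pos_of_pos_of_lt_pi hβ hβπ
  have h_sin_m : 0 < sin (m * β) := sin_pos_of_pos_of_lt_pi (by positivity) hmβ
  have h_sin_succ : sin ((m + 1) * β) < 0 := by
    rw [← sin_sub_two_pi]
    exact sin_neg_of_neg_of_neg_pi_lt (by linarith) (by linarith)
  have hb : 0 < -sin ((m + 1) * β) / r := div_pos (neg_pos.2 h_sin_succ) hr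
  have hc : 0 < sin β / r ^ (m + 1) := by positivity
  refine ⟨C (sin (m * β)) + C (-sin ((m + 1) * β) / r) * X + C (sin β / r ^ (m + 1)) * X ^ (m + 1),
    ?_, ?_, ?_, ?_, ?_⟩
  · compute_degree
  · simpa [coeff_X_pow] using h_sin_m
  · simpa [coeff_X_pow, show m ≠ 0 by omega] using hb
  · intro i
    simp only [coeff_add, coeff_C, coeff_C_mul, coeff_X, coeff_X_pow]
    split_ifs <;> positivity
  · have hr : (r : ℂ) ≠ 0 := by exact_mod_cast hr.ne'
    have key := sin_sub_sub_sin_mul_exp_add_sin_mul_exp ((m + 1) * β) β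
    rw [show (m + 1) * β - β = m * β by ring] at key
    simp only [map_add, map_mul, aeval_C, aeval_X, map_pow, Complex.coe_algebraMap, mul_pow,
      ← Complex.exp_nat_mul]
    rw [show ((m + 1 : ℕ) : ℂ) * (β * Complex.I) = (((m + 1) * β : ℝ) : ℂ) * Complex.I by
      push_cast; ring]
    push_cast at key ⊢
    field_simp
    ring_nf at key ⊢
    linear_combination key

theorem stmt_6 (n : ℕ) (hn : 2 ≤ n) (r : ℝ) (hr : 0 < r) (α : ℝ)
    (hα : α ∈ Set.Ioc (-π) π) (hαn : π / n ≤ |α|)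
    (hint : ¬ ∃ m : ℤ, π / α = (m : ℝ))
    (μ : ℂ) (hμ : μ = (r : ℂ) * (Complex.cos α + Complex.sin α * Complex.I)) :
    ∃ q : Polynomial ℝ, q.natDegree = n ∧ (∀ i ≤ n, 0 < q.coeff i) ∧
      Polynomial.aeval μ q = 0 := by
  have hn0 : (0 : ℝ) < n := by exact_mod_cast (by omega : 0 < n)
  have hα_pos : 0 < |α| := (div_pos pi_pos hn0).trans_le hαn
  have hα_int : ∀ k : ℕ, π / |α| ≠ k := by
    rintro k hk
    refine hint ?_
    rcases abs_choice α with h | h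
    · exact ⟨k, by rw [← h]; exact_mod_cast hk⟩
    · exact ⟨-k, by rw [h, div_neg] at hk; push_cast; linarith⟩
  have hα_lt : |α| < π := (abs_le.2 ⟨hα.1.le, hα.2⟩).lt_of_ne fun h ↦
    hα_int 1 (by rw [h, div_self pi_ne_zero, Nat.cast_one])
  obtain ⟨m, hm, hmn, hmα, hπm⟩ := exists_nat_mul_lt_pi_lt_succ_mul hα_pos hα_lt.le
    (by rwa [div_le_iff₀ hn0, mul_comm] at hαn) hα_int
  obtain ⟨P, hP_deg, h0, h1, hP_nonneg, hP⟩ :=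
    exists_coeff_nonneg_aeval_ofReal_mul_exp_eq_zero hr hα_pos hm hmα hπm
  have him : ((r : ℂ) * Complex.exp (|α| * Complex.I)).im ≠ 0 := by
    rw [Complex.im_ofReal_mul, Complex.exp_ofReal_mul_I_im]
    exact (mul_pos hr (sin_pos_of_pos_of_lt_pi hα_pos hα_lt)).ne'
  obtain ⟨q, hq_deg, hq_pos, hq⟩ :=
    exists_natDegree_eq_coeff_pos_aeval_eq_zero him hP h0 h1 hP_nonneg (hP_deg.trans hmn)
  refine ⟨q, hq_deg, hq_pos, ?_⟩
  rw [hμ, ← Complex.exp_mul_I]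
  rcases abs_choice α with h | h
  · rwa [← h]
  · have : (r : ℂ) * Complex.exp (α * Complex.I) =
        starRingEnd ℂ ((r : ℂ) * Complex.exp (|α| * Complex.I)) := by
      rw [map_mul, Complex.conj_ofReal, ← Complex.exp_conj, map_mul, Complex.conj_ofReal,
        Complex.conj_I, h]
      push_cast
      ring_nf
    rw [this, aeval_conj, hq, map_zero]
end

section
/- Let μ be a nonzero complex number with argument α satisfying π/n ≤ |α| (α ∈ (−π, π], n ≥ 1). Then there exists a multiset Λ = {λ₁, ..., λₙ} of complex numbers containing −μ such that the monic polynomial ∏_{k=1}^n (t + λ_k) has nonnegative real coefficients and nonzero constant term. -/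
open Real Polynomial

/-!
Write `μ = r e^{ia}` and, conjugating if necessary, assume `0 < a ≤ π`; the case `a = π` is
settled by `t + r`. Otherwise pick `k` with `k a < π ≤ (k + 1) a`, so `k + 1 ≤ n`. The identity
`sin a · e^{i(k+1)a} = sin((k+1)a) · e^{ia} - sin(k a)` shows that `μ` is a root of
`t^{k+1} - β t + γ` with `β = r^k sin((k+1)a) / sin a ≤ 0` and
`γ = r^{k+1} sin(k a) / sin a > 0`, since `(k+1)a ∈ [π, 2π)` and `k a ∈ (0, π)`. Multiplying by
`(t + 1)^{n-k-1}` gives a monic real polynomial of degree `n` with nonnegative coefficients,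
positive constant term and root `μ`; the `λ_k` are its roots, negated.
-/

namespace Polynomial

variable {R : Type*} [Semiring R] [PartialOrder R] [IsOrderedRing R]

theorem coeff_mul_nonneg {p q : R[X]} (hp : ∀ i, 0 ≤ p.coeff i) (hq : ∀ i, 0 ≤ q.coeff i)
    (i : ℕ) : 0 ≤ (p * q).coeff i := by
  rw [coeff_mul]
  exact Finset.sum_nonneg fun x _ => mul_nonneg (hp _) (hq _)

theorem coeff_pow_nonneg {p : R[X]} (hp : ∀ i, 0 ≤ p.coeff i) (m i : ℕ) :
    0 ≤ (p ^ m).coeff i := by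
  induction m generalizing i with
  | zero => rw [pow_zero, coeff_one]; exact ite_nonneg zero_le_one le_rfl
  | succ m ih => rw [pow_succ]; exact coeff_mul_nonneg ih hp i

theorem Monic.exists_prod_X_add_C_eq {K : Type*} [Field K] [IsAlgClosed K] {p : K[X]}
    (hp : p.Monic) {m : ℕ} (hm : p.natDegree = m) {z : K} (hz : p.IsRoot z) :
    ∃ lam : Fin m → K, (∃ k, lam k = -z) ∧ ∏ k, (X + C (lam k)) = p := by
  obtain ⟨l, hl⟩ : ∃ l : List K, (l : Multiset K) = p.roots := Quot.exists_rep _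
  have hlen : l.length = m := by
    rw [← hm, ← IsAlgClosed.card_roots_eq_natDegree, ← hl, Multiset.coe_card]
  subst hlen
  obtain ⟨k, hk⟩ := List.mem_iff_get.mp <| by
    rwa [← Multiset.mem_coe, hl, mem_roots hp.ne_zero]
  refine ⟨fun k => -l[k], ⟨k, by simp [← hk]⟩, ?_⟩
  calc ∏ k : Fin l.length, (X + C (-l[k]))
      = (p.roots.map fun a => X - C a).prod := by
        simp only [C_neg, ← sub_eq_add_neg]
        rw [← hl, Multiset.map_coe, Multiset.prod_coe]
        exact Fin.prod_univ_fun_getElem l fun a => X - C a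
    _ = p := prod_multiset_X_sub_C_of_monic_of_roots_card_eq hp
        IsAlgClosed.card_roots_eq_natDegree

end Polynomial

theorem Complex.sin_mul_exp_add_mul_I (x a : ℂ) :
    sin a * exp ((x + a) * I) = sin (x + a) * exp (a * I) - sin x := by
  rw [exp_mul_I, exp_mul_I, sin_add, cos_add]
  linear_combination -sin x * sin_sq_add_cos_sq a

noncomputable def sineTrinomial (r a : ℝ) (k : ℕ) : ℝ[X] :=
  X ^ (k + 1) + (C (-(Real.sin ((k + 1) * a) / Real.sin a) * r ^ k) * X
    + C (Real.sin (k * a) / Real.sin a * r ^ (k + 1)))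

open Complex in
theorem aeval_sineTrinomial (r a : ℝ) (k : ℕ) (ha : Real.sin a ≠ 0) :
    aeval ((r : ℂ) * exp (a * I)) (sineTrinomial r a k) = 0 := by
  have ha' : sin (a : ℂ) ≠ 0 := by exact_mod_cast ha
  have hpow :
      ((r : ℂ) * exp (a * I)) ^ (k + 1) = r ^ (k + 1) * exp (((k + 1) * a : ℝ) * I) := by
    rw [mul_pow, ← Complex.exp_nat_mul]; push_cast; ring_nf
  have key := sin_mul_exp_add_mul_I (k * a) a
  rw [← add_one_mul] at key
  simp only [sineTrinomial, map_add, map_mul, map_pow, aeval_X, aeval_C, Complex.coe_algebraMap,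
    hpow]
  push_cast at key ⊢
  field_simp
  linear_combination (r : ℂ) ^ (k + 1) * key

structure IsNonnegAnnihilator (q : ℝ[X]) (n : ℕ) (z : ℂ) : Prop where
  monic : q.Monic
  natDegree_eq : q.natDegree = n
  coeff_nonneg : ∀ i, 0 ≤ q.coeff i
  coeff_zero_pos : 0 < q.coeff 0
  aeval_eq_zero : aeval z q = 0

namespace IsNonnegAnnihilator

variable {q : ℝ[X]} {n : ℕ} {z : ℂ}

theorem mul_X_add_one_pow (h : IsNonnegAnnihilator q n z) (j : ℕ) :
    IsNonnegAnnihilator (q * (X + 1) ^ j) (n + j) z := by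
  have hmonic : ((X + 1 : ℝ[X]) ^ j).Monic := by simpa using (monic_X_add_C (1 : ℝ)).pow j
  refine ⟨h.monic.mul hmonic, ?_, ?_, ?_, ?_⟩
  · rw [h.monic.natDegree_mul hmonic, h.natDegree_eq, natDegree_pow, ← C_1, natDegree_X_add_C,
      mul_one]
  · refine coeff_mul_nonneg h.coeff_nonneg <| coeff_pow_nonneg (fun i => ?_) j
    rw [coeff_add, coeff_X, coeff_one]; positivity
  · rw [mul_coeff_zero, coeff_zero_eq_eval_zero ((X + 1) ^ j)]
    simpa using h.coeff_zero_pos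
  · rw [map_mul, h.aeval_eq_zero, zero_mul]

theorem conj (h : IsNonnegAnnihilator q n z) : IsNonnegAnnihilator q n (starRingEnd ℂ z) where
  __ := h
  aeval_eq_zero := by
    rw [← Complex.conjAe_coe, aeval_algHom_apply, h.aeval_eq_zero, map_zero]

end IsNonnegAnnihilator

theorem isNonnegAnnihilator_X_add_C {r : ℝ} (hr : 0 < r) :
    IsNonnegAnnihilator (X + C r) 1 (-r) where
  monic := monic_X_add_C r
  natDegree_eq := natDegree_X_add_C r
  coeff_nonneg i := by rw [coeff_add, coeff_X, coeff_C]; positivity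
  coeff_zero_pos := by simpa using hr
  aeval_eq_zero := by simp

theorem isNonnegAnnihilator_sineTrinomial {r a : ℝ} {k : ℕ} (hr : 0 < r) (ha : 0 < a)
    (haπ : a < π) (hk : k * a < π) (hk' : π ≤ (k + 1) * a) :
    IsNonnegAnnihilator (sineTrinomial r a k) (k + 1) (r * Complex.exp (a * Complex.I)) := by
  have hsin : 0 < Real.sin a := sin_pos_of_pos_of_lt_pi ha haπ
  have hka : 0 < k * a := by linarith
  have hk1 : 1 ≤ k := Nat.one_le_iff_ne_zero.mpr <| by rintro rfl; simp at hka
  have hb : 0 ≤ -(Real.sin ((k + 1) * a) / Real.sin a) * r ^ k := by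
    have : 0 ≤ -Real.sin ((k + 1) * a) := by
      rw [← Real.sin_sub_pi]; exact sin_nonneg_of_nonneg_of_le_pi (by linarith) (by linarith)
    rw [← neg_div]; positivity
  have hc : 0 < Real.sin (k * a) / Real.sin a * r ^ (k + 1) := by
    have := sin_pos_of_pos_of_lt_pi hka hk
    positivity
  have hlin : (C (-(Real.sin ((k + 1) * a) / Real.sin a) * r ^ k) * X
      + C (Real.sin (k * a) / Real.sin a * r ^ (k + 1))).degree < ↑(k + 1) :=
    degree_linear_le.trans_lt <| by exact_mod_cast Nat.lt_succ_of_le hk1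
  refine ⟨monic_X_pow_add hlin, ?_, fun i => ?_, ?_, aeval_sineTrinomial r a k hsin.ne'⟩ <;>
    rw [sineTrinomial]
  · rw [natDegree_add_eq_left_of_degree_lt (by rwa [degree_X_pow]), natDegree_X_pow]
  · simp only [coeff_add, coeff_X_pow, coeff_C_mul, coeff_X, coeff_C]
    split_ifs <;> simp only [mul_one, mul_zero, add_zero, zero_add] <;> linarith
  · rw [coeff_add, coeff_add, coeff_X_pow, coeff_C_mul_X, coeff_C_zero]; simpa using hc

theorem exists_nat_mul_lt_le_succ_mul {a x : ℝ} (ha : 0 < a) (hx : 0 < x) :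
    ∃ k : ℕ, k * a < x ∧ x ≤ (k + 1) * a := by
  obtain ⟨k, hk⟩ := Nat.exists_eq_add_one_of_ne_zero (Nat.ceil_pos.mpr (div_pos hx ha)).ne'
  have hlt := Nat.ceil_lt_add_one (div_pos hx ha).le
  have hle := Nat.le_ceil (x / a)
  rw [hk, Nat.cast_add_one] at hlt hle
  exact ⟨k, (lt_div_iff₀ ha).mp (by linarith), (div_le_iff₀ ha).mp hle⟩

theorem exists_isNonnegAnnihilator {r a : ℝ} {n : ℕ} (hr : 0 < r) (ha : 0 < a) (haπ : a ≤ π)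
    (hn : π ≤ n * a) : ∃ q, IsNonnegAnnihilator q n (r * Complex.exp (a * Complex.I)) := by
  rcases haπ.eq_or_lt with rfl | haπ
  · obtain ⟨j, rfl⟩ : ∃ j, n = 1 + j :=
      Nat.exists_eq_add_of_le <| by exact_mod_cast (le_mul_iff_one_le_left ha).mp hn
    rw [Complex.exp_pi_mul_I, mul_neg_one]
    exact ⟨_, (isNonnegAnnihilator_X_add_C hr).mul_X_add_one_pow j⟩
  · obtain ⟨k, hk, hk'⟩ := exists_nat_mul_lt_le_succ_mul ha pi_pos
    obtain ⟨j, rfl⟩ : ∃ j, n = k + 1 + j :=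
      Nat.exists_eq_add_of_le <| by exact_mod_cast lt_of_mul_lt_mul_right (hk.trans_le hn) ha.le
    exact ⟨_, (isNonnegAnnihilator_sineTrinomial hr ha haπ hk hk').mul_X_add_one_pow j⟩

theorem stmt_13 (n : ℕ) (hn : 1 ≤ n) (r : ℝ) (hr : 0 < r) (α : ℝ)
    (hα : α ∈ Set.Ioc (-π) π) (hαn : π / n ≤ |α|)
    (μ : ℂ) (hμ : μ = (r : ℂ) * (Complex.cos α + Complex.sin α * Complex.I)) :
    ∃ lam : Fin n → ℂ, (∃ k : Fin n, lam k = -μ) ∧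
      (∀ i, ((∏ k : Fin n, (X + C (lam k))).coeff i).im = 0 ∧
        0 ≤ ((∏ k : Fin n, (X + C (lam k))).coeff i).re) ∧
      (∏ k : Fin n, (X + C (lam k))).eval 0 ≠ 0 := by
  have hn₀ : (0 : ℝ) < n := by exact_mod_cast hn
  have hα₀ : 0 < |α| := (div_pos pi_pos hn₀).trans_le hαn
  obtain ⟨q, hq⟩ := exists_isNonnegAnnihilator hr hα₀ (abs_le.mpr ⟨hα.1.le, hα.2⟩)
    ((div_le_iff₀' hn₀).mp hαn)
  have hμq : IsNonnegAnnihilator q n μ := by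
    rw [hμ, ← Complex.exp_mul_I]
    rcases abs_choice α with h | h
    · rwa [h] at hq
    · simpa [h, ← Complex.exp_conj] using hq.conj
  obtain ⟨lam, hlam, hprod⟩ := (hμq.monic.map (algebraMap ℝ ℂ)).exists_prod_X_add_C_eq
    (by rw [natDegree_map, hμq.natDegree_eq])
    (by rw [IsRoot, eval_map_algebraMap, hμq.aeval_eq_zero])
  refine ⟨lam, hlam, fun i => ?_, ?_⟩ <;> rw [hprod]
  · simpa using hμq.coeff_nonneg i
  · rw [← coeff_zero_eq_eval_zero, coeff_map]
    simpa using hμq.coeff_zero_pos.ne'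
end

section
/- Let q be a polynomial of degree n ≥ 1 with nonnegative real coefficients, q(0) ≠ 0, and suppose q(μ) = 0 for μ = r(cos α + i sin α), r > 0, α ∈ (−π, π]. Then |α| ≥ π/n. -/
/-
If `q` has nonnegative coefficients and degree `n`, then after rotating by `e^{-i n α / 2}` the
terms `a_i r^i e^{i(i - n/2)α}` of `q(r e^{iα})` all have arguments in `[-n|α|/2, n|α|/2]`. When
`n|α| < π` these lie in the open right half-plane, so every term has nonnegative real part and
the leading one has positive real part; hence `q(r e^{iα}) ≠ 0`.
-/

open Real Polynomial

open Complex in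
theorem re_exp_neg_mul_aeval_polar (q : ℝ[X]) (r α θ : ℝ) :
    (exp (-θ * I) * aeval (r * exp (α * I)) q).re =
      ∑ i ∈ Finset.range (q.natDegree + 1), q.coeff i * r ^ i * Real.cos (i * α - θ) := by
  rw [aeval_eq_sum_range, Finset.mul_sum, re_sum]
  refine Finset.sum_congr rfl fun i _ => ?_
  have hterm : exp (-θ * I) * (q.coeff i • (r * exp (α * I)) ^ i) =
      ((q.coeff i * r ^ i : ℝ) : ℂ) * exp ((i * α - θ : ℝ) * I) := by
    rw [show ((i * α - θ : ℝ) : ℂ) * I = i * (α * I) + -θ * I by push_cast; ring, Complex.exp_add,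
      Complex.exp_nat_mul, real_smul, mul_pow]
    push_cast
    ring
  rw [hterm, re_ofReal_mul, exp_ofReal_mul_I_re]

theorem cos_mul_sub_half_mul_pos {i n : ℕ} {α : ℝ} (hi : i ≤ n) (hα : |α| * n < π) :
    0 < Real.cos (i * α - n * α / 2) := by
  have hi' : (i : ℝ) ≤ n := by exact_mod_cast hi
  have hcentre : |(i : ℝ) - n / 2| ≤ n / 2 :=
    abs_le.mpr ⟨by linarith [i.cast_nonneg (α := ℝ)], by linarith⟩
  have hbound : |i * α - n * α / 2| < π / 2 :=
    calc |i * α - n * α / 2| = |(i : ℝ) - n / 2| * |α| := by rw [← abs_mul]; ring_nf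
      _ ≤ n / 2 * |α| := by gcongr
      _ < π / 2 := by linarith
  exact cos_pos_of_mem_Ioo (abs_lt.mp hbound)

theorem aeval_polar_ne_zero_of_abs_mul_natDegree_lt_pi {q : ℝ[X]} (hcoeff : ∀ i, 0 ≤ q.coeff i)
    (hq : q ≠ 0) {r α : ℝ} (hr : 0 < r) (hα : |α| * q.natDegree < π) :
    aeval ((r : ℂ) * Complex.exp (α * Complex.I)) q ≠ 0 := by
  intro hroot
  have hre := re_exp_neg_mul_aeval_polar q r α (q.natDegree * α / 2)
  rw [hroot, mul_zero, Complex.zero_re] at hre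
  have hlead : 0 < q.leadingCoeff := (hcoeff _).lt_of_ne' (leadingCoeff_ne_zero.mpr hq)
  refine hre.not_lt (Finset.sum_pos' (fun i hi => ?_) ⟨q.natDegree, by simp, ?_⟩)
  · have hcos := cos_mul_sub_half_mul_pos (Nat.lt_succ_iff.mp (Finset.mem_range.mp hi)) hα
    have := hcoeff i
    positivity
  · have hcos := cos_mul_sub_half_mul_pos le_rfl hα
    exact mul_pos (mul_pos hlead (pow_pos hr _)) hcos

theorem stmt_15_general (n : ℕ) (hn : 1 ≤ n) (q : Polynomial ℝ) (hdeg : q.natDegree = n)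
    (hcoeff : ∀ i, 0 ≤ q.coeff i)
    (r : ℝ) (hr : 0 < r) (α : ℝ)
    (μ : ℂ) (hμ : μ = (r : ℂ) * (Complex.cos α + Complex.sin α * Complex.I))
    (hroot : Polynomial.aeval μ q = 0) :
    π / n ≤ |α| := by
  by_contra! hsmall
  have hq : q ≠ 0 := ne_zero_of_natDegree_gt (n := 0) (by omega)
  have hα : |α| * q.natDegree < π := by
    rwa [hdeg, ← lt_div_iff₀ (by exact_mod_cast hn)]
  rw [hμ, ← Complex.exp_mul_I] at hroot
  exact aeval_polar_ne_zero_of_abs_mul_natDegree_lt_pi hcoeff hq hr hα hroot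

theorem stmt_15 (n : ℕ) (hn : 1 ≤ n) (q : Polynomial ℝ) (hdeg : q.natDegree = n)
    (hcoeff : ∀ i, 0 ≤ q.coeff i) (h0 : q.eval 0 ≠ 0)
    (r : ℝ) (hr : 0 < r) (α : ℝ) (hα : α ∈ Set.Ioc (-π) π)
    (μ : ℂ) (hμ : μ = (r : ℂ) * (Complex.cos α + Complex.sin α * Complex.I))
    (hroot : Polynomial.aeval μ q = 0) :
    π / n ≤ |α| :=
  stmt_15_general n hn q hdeg hcoeff r hr α μ hμ hroot
end

section
/- Let q be a polynomial of degree n ≥ 1 with nonnegative real coefficients, q(0) ≠ 0, q(μ) = 0 for μ = r(cos α + i sin α) with r > 0 and α ∈ (−π, π], and suppose |α| = π/n. Then q(t) = a_n t^n + a_0 for some a_n, a_0 > 0 (all intermediate coefficients vanish). -/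
/-!
Write the root as `μ = r e^{iα}`. As `q` has real coefficients, `conj μ` is a root too, so we may
take `α = π / n`. Then `0 = Im q(μ) = ∑ aᵢ rⁱ sin(iπ/n)`, where every term is nonnegative because
`0 ≤ iπ/n ≤ π`, and `sin(iπ/n) > 0` for `0 < i < n`; hence `aᵢ = 0` for those `i`. Finally
`a₀ = q(0) ≠ 0` and `aₙ` is the leading coefficient.
-/

open Real Polynomial

namespace Polynomial

theorem im_aeval_ofReal_mul_exp (p : ℝ[X]) (r θ : ℝ) :
    (aeval ((r : ℂ) * Complex.exp (θ * Complex.I)) p).im =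
      ∑ i ∈ Finset.range (p.natDegree + 1), p.coeff i * r ^ i * Real.sin (i * θ) := by
  rw [aeval_eq_sum_range, Complex.im_sum]
  refine Finset.sum_congr rfl fun i _ => ?_
  rw [mul_pow, ← Complex.exp_nat_mul, ← Complex.ofReal_pow, Algebra.smul_def,
    Complex.coe_algebraMap, ← mul_assoc, ← Complex.ofReal_mul, ← mul_assoc,
    ← Complex.ofReal_natCast, ← Complex.ofReal_mul, Complex.im_ofReal_mul,
    Complex.exp_ofReal_mul_I_im]

theorem aeval_ofReal_mul_exp_neg_eq_zero_iff (p : ℝ[X]) (r θ : ℝ) :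
    aeval ((r : ℂ) * Complex.exp (↑(-θ) * Complex.I)) p = 0 ↔
      aeval ((r : ℂ) * Complex.exp (θ * Complex.I)) p = 0 := by
  have hconj : (r : ℂ) * Complex.exp (↑(-θ) * Complex.I) =
      starRingEnd ℂ ((r : ℂ) * Complex.exp (θ * Complex.I)) := by
    rw [map_mul, Complex.conj_ofReal, ← Complex.exp_conj, map_mul, Complex.conj_ofReal,
      Complex.conj_I, Complex.ofReal_neg, neg_mul, mul_neg]
  rw [hconj, aeval_conj, map_eq_zero]

theorem coeff_eq_zero_of_aeval_ofReal_mul_exp_pi_div_eq_zero {p : ℝ[X]} {n : ℕ}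
    (hdeg : p.natDegree ≤ n) (hcoeff : ∀ i, 0 ≤ p.coeff i) {r : ℝ} (hr : 0 < r)
    (hroot : aeval ((r : ℂ) * Complex.exp (↑(π / n) * Complex.I)) p = 0)
    {i : ℕ} (hi0 : 0 < i) (hin : i < n) : p.coeff i = 0 := by
  have hsin_nonneg : ∀ j ≤ n, 0 ≤ Real.sin (j * (π / n)) := fun j hj => by
    rcases Nat.eq_zero_or_pos n with rfl | hn
    · simp
    refine Real.sin_nonneg_of_nonneg_of_le_pi (by positivity) ?_
    rw [← mul_div_assoc, div_le_iff₀ (by positivity), mul_comm]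
    gcongr
  have hterm_nonneg : ∀ j ∈ Finset.range (p.natDegree + 1),
      0 ≤ p.coeff j * r ^ j * Real.sin (j * (π / n)) := fun j hj =>
    mul_nonneg (mul_nonneg (hcoeff j) (pow_nonneg hr.le j))
      (hsin_nonneg j ((Finset.mem_range_succ_iff.mp hj).trans hdeg))
  have hterm_eq_zero := (Finset.sum_eq_zero_iff_of_nonneg hterm_nonneg).mp <| by
    rw [← im_aeval_ofReal_mul_exp, hroot, Complex.zero_im]
  rcases le_or_gt i p.natDegree with hi | hi
  · have hi0' : (0 : ℝ) < i := by exact_mod_cast hi0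
    have hn : (0 : ℝ) < n := by exact_mod_cast hi0.trans hin
    have hsin : 0 < Real.sin (i * (π / n)) := by
      refine Real.sin_pos_of_pos_of_lt_pi (by positivity) ?_
      rw [← mul_div_assoc, div_lt_iff₀ hn, mul_comm]
      gcongr
    simpa [hr.ne', hsin.ne'] using hterm_eq_zero i (Finset.mem_range_succ_iff.mpr hi)
  · exact coeff_eq_zero_of_natDegree_lt hi

theorem eq_C_mul_X_pow_add_C_of_coeff_eq_zero {R : Type*} [Semiring R] {p : R[X]} {n : ℕ}
    (hdeg : p.natDegree ≤ n) (hn : 0 < n) (h : ∀ i, 0 < i → i < n → p.coeff i = 0) :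
    p = C (p.coeff n) * X ^ n + C (p.coeff 0) := by
  ext j
  rw [coeff_add, coeff_C_mul_X_pow, coeff_C]
  rcases lt_trichotomy j n with hj | rfl | hj
  · rcases Nat.eq_zero_or_pos j with rfl | hj0
    · simp [hn.ne]
    · simp [hj.ne, hj0.ne', h j hj0 hj]
  · simp [hn.ne']
  · simp [hj.ne', (hn.trans hj).ne', coeff_eq_zero_of_natDegree_lt (hdeg.trans_lt hj)]

end Polynomial

theorem stmt_16_general (n : ℕ) (hn : 1 ≤ n) (q : Polynomial ℝ) (hdeg : q.natDegree = n)
    (hcoeff : ∀ i, 0 ≤ q.coeff i) (h0 : q.eval 0 ≠ 0)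
    (r : ℝ) (hr : 0 < r) (α : ℝ)
    (μ : ℂ) (hμ : μ = (r : ℂ) * (Complex.cos α + Complex.sin α * Complex.I))
    (hroot : Polynomial.aeval μ q = 0) (heq : |α| = π / n) :
    ∃ an a0 : ℝ, 0 < an ∧ 0 < a0 ∧ q = C an * X ^ n + C a0 := by
  have hroot' : aeval ((r : ℂ) * Complex.exp (↑(π / n) * Complex.I)) q = 0 := by
    rw [hμ, Complex.cos_add_sin_I] at hroot
    rcases (abs_eq (by positivity)).mp heq with rfl | rfl
    · exact hroot
    · exact (aeval_ofReal_mul_exp_neg_eq_zero_iff q r _).mp hroot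
  have hq : q ≠ 0 := by rintro rfl; simp at h0
  have han : q.coeff n ≠ 0 := by rw [← hdeg]; exact leadingCoeff_ne_zero.mpr hq
  have ha0 : q.coeff 0 ≠ 0 := by rwa [coeff_zero_eq_eval_zero]
  exact ⟨q.coeff n, q.coeff 0, (hcoeff n).lt_of_ne' han, (hcoeff 0).lt_of_ne' ha0,
    eq_C_mul_X_pow_add_C_of_coeff_eq_zero hdeg.le hn fun i hi0 hin =>
      coeff_eq_zero_of_aeval_ofReal_mul_exp_pi_div_eq_zero hdeg.le hcoeff hr hroot' hi0 hin⟩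

theorem stmt_16 (n : ℕ) (hn : 1 ≤ n) (q : Polynomial ℝ) (hdeg : q.natDegree = n)
    (hcoeff : ∀ i, 0 ≤ q.coeff i) (h0 : q.eval 0 ≠ 0)
    (r : ℝ) (hr : 0 < r) (α : ℝ) (hα : α ∈ Set.Ioc (-π) π)
    (μ : ℂ) (hμ : μ = (r : ℂ) * (Complex.cos α + Complex.sin α * Complex.I))
    (hroot : Polynomial.aeval μ q = 0) (heq : |α| = π / n) :
    ∃ an a0 : ℝ, 0 < an ∧ 0 < a0 ∧ q = C an * X ^ n + C a0 :=
  stmt_16_general n hn q hdeg hcoeff h0 r hr α μ hμ hroot heq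
end
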